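/- arXiv:2411.13444 — 9 statements merged into one kernel-verified Lean document; each statement's English description precedes it below -/
import Mathlib

section
/- Let f : ℝ → ℝ be C² with f''(u) ≥ c₀ > 0 for all u, and let g : ℝ → ℝ satisfy g(u) < f(u) for all u. Fix u⁺ ∈ ℝ. Then there exists a unique u* > u⁺ such that the line through (u⁺, g(u⁺)) and (u*, f(u*)) is tangent to the graph of f at u*, i.e., f'(u*) = (f(u*) - g(u⁺))/(u* - u⁺). -/
/-!
Rewrite the tangency condition as `T uS = g uP`, where `T u = f u + f' u * (uP - u)` is the value
at `uP` of the tangent line to `f` at `u`. Since `T' u = f'' u * (uP - u)`, the function `T` is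
strictly decreasing on `[uP, ∞)` and eventually decreases at rate at least `c₀`, so it falls from
`T uP = f uP > g uP` to below `g uP`; the intermediate value theorem and strict monotonicity give
existence and uniqueness.
-/

open Set

lemma existsUnique_mem_Ioi_eq_of_strictAntiOn {φ : ℝ → ℝ} {a b y : ℝ}
    (hcont : ContinuousOn φ (Ici a)) (hanti : StrictAntiOn φ (Ici a))
    (ha : y < φ a) (hab : a ≤ b) (hb : φ b ≤ y) :
    ∃! x, a < x ∧ φ x = y := by
  obtain ⟨x, hx, hφx⟩ := intermediate_value_Icc' hab (hcont.mono Icc_subset_Ici_self) ⟨hb, ha.le⟩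
  have hax : a < x := hx.1.lt_of_ne (by rintro rfl; exact ha.ne' hφx)
  refine ⟨x, ⟨hax, hφx⟩, fun z ⟨haz, hφz⟩ => ?_⟩
  exact hanti.injOn haz.le hax.le (hφz.trans hφx.symm)

lemma exists_ge_le_of_deriv_le_neg {φ : ℝ → ℝ} {x₀ c : ℝ} (hc : 0 < c)
    (hφ : Differentiable ℝ φ) (hderiv : ∀ x, x₀ < x → deriv φ x ≤ -c) (y : ℝ) :
    ∃ b, x₀ ≤ b ∧ φ b ≤ y := by
  set b := x₀ + |φ x₀ - y| / c
  have hx₀b : x₀ ≤ b := le_add_of_nonneg_right (by positivity)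
  have hdecay : φ b - φ x₀ ≤ -c * (b - x₀) :=
    (convex_Ici x₀).image_sub_le_mul_sub_of_deriv_le hφ.continuous.continuousOn
      hφ.differentiableOn (fun x hx => hderiv x (by rwa [interior_Ici] at hx))
      x₀ self_mem_Ici b hx₀b hx₀b
  have hdrop : c * (b - x₀) = |φ x₀ - y| := by
    rw [add_sub_cancel_left, mul_div_cancel₀ _ hc.ne']
  refine ⟨b, hx₀b, ?_⟩
  linarith [le_abs_self (φ x₀ - y)]

noncomputable def tangentValue (f : ℝ → ℝ) (a u : ℝ) : ℝ := f u + deriv f u * (a - u)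

section Tangent

variable {f : ℝ → ℝ} (a : ℝ)

lemma ContDiff.hasDerivAt_tangentValue (hf : ContDiff ℝ 2 f) (u : ℝ) :
    HasDerivAt (tangentValue f a) (deriv (deriv f) u * (a - u)) u := by
  obtain ⟨hdf, -, hf'⟩ := contDiff_succ_iff_deriv.mp (show ContDiff ℝ (1 + 1) f from hf)
  have hderiv : HasDerivAt (tangentValue f a)
      (deriv f u + (deriv (deriv f) u * (a - u) + deriv f u * -1)) u :=
    (hdf u).hasDerivAt.fun_add
      ((hf'.differentiable one_ne_zero u).hasDerivAt.fun_mul ((hasDerivAt_id' u).const_sub a))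
  convert hderiv using 1
  ring

lemma ContDiff.differentiable_tangentValue (hf : ContDiff ℝ 2 f) :
    Differentiable ℝ (tangentValue f a) :=
  fun u => (hf.hasDerivAt_tangentValue a u).differentiableAt

lemma ContDiff.strictAntiOn_tangentValue (hf : ContDiff ℝ 2 f)
    (hf'' : ∀ u, 0 < deriv (deriv f) u) :
    StrictAntiOn (tangentValue f a) (Ici a) := by
  refine strictAntiOn_of_deriv_neg (convex_Ici a)
    (hf.differentiable_tangentValue a).continuous.continuousOn fun u hu => ?_
  rw [interior_Ici] at hu
  rw [(hf.hasDerivAt_tangentValue a u).deriv]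
  exact mul_neg_of_pos_of_neg (hf'' u) (sub_neg.mpr hu)

lemma ContDiff.exists_tangentValue_le (hf : ContDiff ℝ 2 f) {c₀ : ℝ} (hc₀ : 0 < c₀)
    (hf'' : ∀ u, c₀ ≤ deriv (deriv f) u) (y : ℝ) :
    ∃ b, a ≤ b ∧ tangentValue f a b ≤ y := by
  obtain ⟨b, hb, hby⟩ := exists_ge_le_of_deriv_le_neg hc₀ (hf.differentiable_tangentValue a)
    (x₀ := a + 1) (fun u hu => by
      rw [(hf.hasDerivAt_tangentValue a u).deriv]
      nlinarith [hf'' u]) y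
  exact ⟨b, by linarith, hby⟩

end Tangent

theorem stmt_0 (f g : ℝ → ℝ) (c₀ : ℝ) (hc₀ : 0 < c₀)
    (hf : ContDiff ℝ 2 f) (hf'' : ∀ u, c₀ ≤ deriv (deriv f) u)
    (hfg : ∀ u, g u < f u) (uP : ℝ) :
    ∃! uS : ℝ, uP < uS ∧ deriv f uS * (uS - uP) = f uS - g uP := by
  have htangent : ∀ u, deriv f u * (u - uP) = f u - g uP ↔ tangentValue f uP u = g uP := by
    intro u
    unfold tangentValue
    constructor <;> intro h <;> linarith
  obtain ⟨b, hb, hTb⟩ := hf.exists_tangentValue_le uP hc₀ hf'' (g uP)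
  have hstart : g uP < tangentValue f uP uP := by simpa [tangentValue] using hfg uP
  simpa only [htangent] using existsUnique_mem_Ioi_eq_of_strictAntiOn
    (hf.differentiable_tangentValue uP).continuous.continuousOn
    (hf.strictAntiOn_tangentValue uP fun u => hc₀.trans_le (hf'' u)) hstart hb hTb
end

section
/- Let f : ℝ → ℝ be C² with f''(u) ≥ c₀ > 0 for all u, and let g : ℝ → ℝ satisfy g(u) < f(u) for all u. Fix u⁻ ∈ ℝ. Then there exists a unique v* < u⁻ such that f'(v*)·(v* - u⁻) = f(v*) - g(u⁻). -/
/-!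
The tangent line to the graph of `f` at `v` meets the vertical line through `u⁻` at height
`T(v) = f(v) + f'(v)(u⁻ - v)`, and the equation asks for `T(v) = g(u⁻)`. Since
`T'(v) = f''(v)(u⁻ - v)`, `T` is strictly increasing on `(-∞, u⁻]` with slope at least `c₀`
left of `u⁻ - 1`, so it tends to `-∞` at `-∞`, while `T(u⁻) = f(u⁻) > g(u⁻)`. The intermediate
value theorem and strict monotonicity give exactly one solution.
-/

open Set Filter

noncomputable def tangentValueAt (f : ℝ → ℝ) (u v : ℝ) : ℝ :=
  f v + deriv f v * (u - v)

theorem hasDerivAt_tangentValueAt {f : ℝ → ℝ} {u v : ℝ} (hf : DifferentiableAt ℝ f v)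
    (hf' : DifferentiableAt ℝ (deriv f) v) :
    HasDerivAt (tangentValueAt f u) (deriv (deriv f) v * (u - v)) v :=
  (hf.hasDerivAt.add (hf'.hasDerivAt.mul ((hasDerivAt_id' v).const_sub u))).congr_deriv
    (by ring)

theorem strictMonoOn_tangentValueAt {f : ℝ → ℝ} (u : ℝ) (hf : Differentiable ℝ f)
    (hf' : Differentiable ℝ (deriv f)) (hf'' : ∀ v < u, 0 < deriv (deriv f) v) :
    StrictMonoOn (tangentValueAt f u) (Iic u) := by
  have hT v := hasDerivAt_tangentValueAt (u := u) (hf v) (hf' v)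
  refine strictMonoOn_of_deriv_pos (convex_Iic u)
    (fun v _ => (hT v).continuousAt.continuousWithinAt) fun v hv => ?_
  rw [interior_Iic] at hv
  rw [(hT v).deriv]
  exact mul_pos (hf'' v hv) (sub_pos.2 hv)

theorem tendsto_atBot_of_le_deriv {φ : ℝ → ℝ} {a c : ℝ} (hc : 0 < c)
    (hφ : ∀ x ≤ a, DifferentiableAt ℝ φ x) (hφ' : ∀ x < a, c ≤ deriv φ x) :
    Tendsto φ atBot atBot := by
  have hbound : ∀ x ≤ a, φ x ≤ c * x + (φ a - c * a) := fun x hx => by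
    have := (convex_Iic a).mul_sub_le_image_sub_of_le_deriv
      (fun y hy => (hφ y hy).continuousAt.continuousWithinAt)
      (fun y hy => (hφ y (interior_subset hy : y ∈ Iic a)).differentiableWithinAt)
      (fun y hy => hφ' y (by rwa [interior_Iic] at hy)) x hx a self_mem_Iic hx
    linarith
  refine tendsto_atBot_mono' _ (eventually_le_atBot a |>.mono hbound) ?_
  exact tendsto_atBot_add_const_right _ _ (tendsto_id.const_mul_atBot hc)

theorem existsUnique_lt_eq_of_strictMonoOn {φ : ℝ → ℝ} {u y : ℝ}
    (hcont : ContinuousOn φ (Iic u)) (hmono : StrictMonoOn φ (Iic u))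
    (hbot : Tendsto φ atBot atBot) (hy : y < φ u) :
    ∃! v, v < u ∧ φ v = y := by
  obtain ⟨a, ha⟩ := (hbot.eventually (eventually_lt_atBot y)).and (eventually_le_atBot u)
    |>.exists
  obtain ⟨v, ⟨-, hvu⟩, hv⟩ := intermediate_value_Ico ha.2 (hcont.mono Icc_subset_Iic_self)
    ⟨ha.1.le, hy⟩
  exact ⟨v, ⟨hvu, hv⟩, fun w ⟨hwu, hw⟩ => hmono.injOn hwu.le hvu.le (hw.trans hv.symm)⟩

theorem stmt_1 (f g : ℝ → ℝ) (c₀ : ℝ) (hc₀ : 0 < c₀)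
    (hf : ContDiff ℝ 2 f) (hf'' : ∀ u, c₀ ≤ deriv (deriv f) u)
    (hfg : ∀ u, g u < f u) (uM : ℝ) :
    ∃! vS : ℝ, vS < uM ∧ deriv f vS * (vS - uM) = f vS - g uM := by
  have hd : Differentiable ℝ f := hf.differentiable two_ne_zero
  have hd' : Differentiable ℝ (deriv f) := hf.differentiable_deriv_two
  have hT v := hasDerivAt_tangentValueAt (u := uM) (hd v) (hd' v)
  have hbot : Tendsto (tangentValueAt f uM) atBot atBot :=
    tendsto_atBot_of_le_deriv (a := uM - 1) hc₀ (fun v _ => (hT v).differentiableAt)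
      fun v hv => by
        rw [(hT v).deriv]
        nlinarith [hf'' v]
  have hunique : ∃! v, v < uM ∧ tangentValueAt f uM v = g uM :=
    existsUnique_lt_eq_of_strictMonoOn (fun v _ => (hT v).continuousAt.continuousWithinAt)
      (strictMonoOn_tangentValueAt uM hd hd' fun v _ => hc₀.trans_le (hf'' v)) hbot
      (by simpa [tangentValueAt] using hfg uM)
  refine (existsUnique_congr fun v => and_congr_right fun _ => ?_).1 hunique
  unfold tangentValueAt
  constructor <;> intro h <;> linarith
end

section
/- Let f, g : ℝ → ℝ be strictly convex with f(u) > g(u) for all u. If u⁻ < u⁺ and λ = (g(u⁺) - f(u⁻))/(u⁺ - u⁻), then λ < g'(u⁺), i.e., the upward jump with θ⁻ = 1, θ⁺ = 0 violates the Lax admissibility condition g'(u⁺) ≤ λ. -/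
theorem stmt_2_general (f g : ℝ → ℝ)
    (hg : Differentiable ℝ g)
    (hgc : StrictConvexOn ℝ Set.univ g)
    (hfg : ∀ u, g u < f u) (uM uP : ℝ) (h : uM < uP) :
    (g uP - f uM) / (uP - uM) < deriv g uP := by
  have hd : 0 < uP - uM := sub_pos.mpr h
  calc (g uP - f uM) / (uP - uM) < (g uP - g uM) / (uP - uM) := by gcongr; exact hfg uM
    _ = slope g uM uP := (slope_def_field g uM uP).symm
    _ < deriv g uP :=
      hgc.slope_lt_of_hasDerivWithinAt (Set.mem_univ _) (Set.mem_univ _) h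
        (hg uP).hasDerivAt.hasDerivWithinAt

theorem stmt_2 (f g : ℝ → ℝ)
    (hf : Differentiable ℝ f) (hg : Differentiable ℝ g)
    (hfc : StrictConvexOn ℝ Set.univ f) (hgc : StrictConvexOn ℝ Set.univ g)
    (hfg : ∀ u, g u < f u) (uM uP : ℝ) (h : uM < uP) :
    (g uP - f uM) / (uP - uM) < deriv g uP :=
  stmt_2_general f g hg hgc hfg uM uP h
end

section
/- Let f, g : ℝ → ℝ with f C², f'' ≥ c₀ > 0, g differentiable and convex, f > g everywhere. Let u⁻ > u⁺ and let u* > u⁺ be the unique point with f'(u*)·(u* - u⁺) = f(u*) - g(u⁺). If u⁻ ≥ u*, then the downward jump with left flux f and right flux g is Lax admissible: g'(u⁺) ≤ (f(u⁻) - g(u⁺))/(u⁻ - u⁺) ≤ f'(u⁻). -/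
/-!
The lower Lax inequality is convexity of `g` (its derivative at `u⁺` is at most the slope of the
chord to `u⁻`) combined with `g < f` at `u⁻`. For the upper one, note that for convex `f` the
height at `u⁺` of the tangent line to `f` at `u` decreases as `u ≥ u⁺` grows. By the choice of `u*`
that height is `g u⁺` at `u = u*`, so at `u = u⁻ ≥ u*` the tangent lies below the point
`(u⁺, g u⁺)`, which says exactly that the chord from `(u⁺, g u⁺)` to `(u⁻, f u⁻)` is no steeper
than `f'(u⁻)`.
-/

open Set

namespace ConvexOn

variable {f : ℝ → ℝ} {p q y : ℝ}

theorem deriv_le_div_of_le (hfc : ConvexOn ℝ univ f) (hf : DifferentiableAt ℝ f p)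
    (hpq : p < q) (hy : f q ≤ y) : deriv f p ≤ (y - f p) / (q - p) :=
  (hfc.deriv_le_slope (mem_univ p) (mem_univ q) hpq hf).trans <| by
    rw [slope_def_field]
    gcongr

theorem antitoneOn_tangent_apply (hfc : ConvexOn ℝ univ f) (hf : Differentiable ℝ f) (p : ℝ) :
    AntitoneOn (fun u => f u + deriv f u * (p - u)) (Ici p) := by
  intro a ha b hb hab
  rcases hab.eq_or_lt with rfl | hlt
  · rfl
  have hchord : f b - f a ≤ deriv f b * (b - a) := by
    have := hfc.slope_le_deriv (mem_univ a) (mem_univ b) hlt (hf b)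
    rwa [slope_def_field, div_le_iff₀ (sub_pos.mpr hlt)] at this
  have hderiv : deriv f a * (a - p) ≤ deriv f b * (a - p) :=
    mul_le_mul_of_nonneg_right
      (hfc.monotoneOn_deriv (fun x _ => hf x) (mem_univ a) (mem_univ b) hab) (sub_nonneg.mpr ha)
  simp only
  linarith

theorem div_le_deriv_of_tangent_apply_eq (hfc : ConvexOn ℝ univ f) (hf : Differentiable ℝ f)
    {a b c : ℝ} (hpa : p < a) (hab : a ≤ b) (htan : f a + deriv f a * (p - a) = c) :
    (f b - c) / (b - p) ≤ deriv f b := by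
  have := hfc.antitoneOn_tangent_apply hf p (mem_Ici.mpr hpa.le) (mem_Ici.mpr (hpa.le.trans hab))
    hab
  rw [div_le_iff₀ (by linarith)]
  simp only at this
  linarith

end ConvexOn

theorem stmt_4 (f g : ℝ → ℝ) (c₀ : ℝ) (hc₀ : 0 < c₀)
    (hf : ContDiff ℝ 2 f) (hf'' : ∀ u, c₀ ≤ deriv (deriv f) u)
    (hg : Differentiable ℝ g) (hgc : ConvexOn ℝ Set.univ g)
    (hfg : ∀ u, g u < f u) (uM uP uS : ℝ)
    (h : uP < uM) (hS : uP < uS)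
    (htan : deriv f uS * (uS - uP) = f uS - g uP)
    (hMS : uS ≤ uM) :
    deriv g uP ≤ (f uM - g uP) / (uM - uP) ∧
      (f uM - g uP) / (uM - uP) ≤ deriv f uM := by
  have hfd : Differentiable ℝ f := hf.differentiable (by norm_num)
  have hfc : ConvexOn ℝ univ f :=
    convexOn_univ_of_deriv2_nonneg hfd hf.differentiable_deriv_two fun u => by
      simpa using hc₀.le.trans (hf'' u)
  exact ⟨hgc.deriv_le_div_of_le (hg uP) h (hfg uM).le,
    hfc.div_le_deriv_of_tangent_apply_eq hfd hS hMS (by linarith)⟩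
end

section
/- Let f, g : ℝ → ℝ with f C², f'' ≥ c₀ > 0, g convex differentiable, f > g everywhere. Let u⁻ > u⁺ and let v* < u⁻ be the unique point with f'(v*)·(v* - u⁻) = f(v*) - g(u⁻). If u⁺ ≤ v*, then the downward jump with left flux g and right flux f is Lax admissible: f'(u⁺) ≤ (g(u⁻) - f(u⁺))/(u⁻ - u⁺) ≤ g'(u⁻). -/
open Set

/- The value at `x` of the tangent line of a convex `f` at `v` grows as `v` moves right towards `x`.
The tangent condition on `vS` says that the tangent line of `f` at `vS` passes through `(uM, g uM)`,
so for `uP ≤ vS` the tangent line at `uP` lies below `g uM` at `uM`: this is `f'(uP) ≤ λ`.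
The other inequality is the chord-below-tangent property of the convex `g`, since `f(uP) > g(uP)`. -/

theorem ConvexOn.monotoneOn_tangent_eval {f : ℝ → ℝ} (hfc : ConvexOn ℝ univ f)
    (hf : Differentiable ℝ f) (x : ℝ) :
    MonotoneOn (fun v => f v + deriv f v * (x - v)) (Iic x) := by
  intro v _ w hw hvw
  rcases hvw.eq_or_lt with rfl | hvw
  · rfl
  have hv_slope : deriv f v ≤ slope f v w :=
    hfc.deriv_le_slope (mem_univ v) (mem_univ w) hvw (hf v)
  have hslope_w : slope f v w ≤ deriv f w :=
    hfc.slope_le_deriv (mem_univ v) (mem_univ w) hvw (hf w)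
  have hderiv : deriv f v * (x - w) ≤ deriv f w * (x - w) :=
    mul_le_mul_of_nonneg_right (hv_slope.trans hslope_w) (sub_nonneg.mpr hw)
  rw [slope_def_field, le_div_iff₀ (sub_pos.mpr hvw)] at hv_slope
  simp only
  linarith

theorem stmt_5 (f g : ℝ → ℝ) (c₀ : ℝ) (hc₀ : 0 < c₀)
    (hf : ContDiff ℝ 2 f) (hf'' : ∀ u, c₀ ≤ deriv (deriv f) u)
    (hg : Differentiable ℝ g) (hgc : ConvexOn ℝ Set.univ g)
    (hfg : ∀ u, g u < f u) (uM uP vS : ℝ)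
    (h : uP < uM) (hS : vS < uM)
    (htan : deriv f vS * (vS - uM) = f vS - g uM)
    (hPS : uP ≤ vS) :
    deriv f uP ≤ (g uM - f uP) / (uM - uP) ∧
      (g uM - f uP) / (uM - uP) ≤ deriv g uM := by
  have hfd : Differentiable ℝ f := hf.differentiable (by norm_num)
  have hfc : ConvexOn ℝ univ f :=
    convexOn_univ_of_deriv2_nonneg hfd ((hf.iterate_deriv' 1 1).differentiable (by norm_num))
      fun u => hc₀.le.trans (hf'' u)
  have htangent : f uP + deriv f uP * (uM - uP) ≤ g uM :=
    calc f uP + deriv f uP * (uM - uP) ≤ f vS + deriv f vS * (uM - vS) :=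
          hfc.monotoneOn_tangent_eval hfd uM (hPS.trans hS.le) hS.le hPS
      _ = g uM := by linarith
  constructor
  · rw [le_div_iff₀ (sub_pos.mpr h)]
    linarith
  · calc (g uM - f uP) / (uM - uP) ≤ slope g uP uM := by
          rw [slope_def_field]
          gcongr
          exact (hfg uP).le
      _ ≤ deriv g uM := hgc.slope_le_deriv (mem_univ uP) (mem_univ uM) h (hg uM)
end

section
/- Let f : ℝ → ℝ be differentiable and strictly convex, g : ℝ → ℝ with g < f, and u⁺ ∈ ℝ. Let u* > u⁺ satisfy f'(u*) = (f(u*) - g(u⁺))/(u* - u⁺). Then for all u > u*, f'(u) > (f(u) - g(u⁺))/(u - u⁺), and for all u⁺ < u < u*, f'(u) < (f(u) - g(u⁺))/(u - u⁺). -/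
/-!
For a strictly convex differentiable `f`, the quantity `f'(u) (u - u⁺) - f(u)` is strictly
increasing for `u ≥ u⁺`: it is minus the value at `u⁺` of the tangent line at `u`, and the
tangent lines of a strictly convex function fall at `u⁺` as their contact point moves right of `u⁺`.
The tangency condition says this quantity equals `-g(u⁺)` at `u*`, so it is above `-g(u⁺)`
to the right of `u*` and below it between `u⁺` and `u*`; dividing by `u - u⁺ > 0` gives both
inequalities.
-/

open Set

theorem StrictConvexOn.strictMonoOn_deriv_mul_sub_sub {S : Set ℝ} {f : ℝ → ℝ}
    (hfc : StrictConvexOn ℝ S f) (hfd : ∀ x ∈ S, DifferentiableAt ℝ f x) (p : ℝ) :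
    StrictMonoOn (fun u => deriv f u * (u - p) - f u) (S ∩ Ici p) := by
  rintro u ⟨huS, hpu⟩ v ⟨hvS, -⟩ huv
  have hu_lt : deriv f u < slope f u v := hfc.deriv_lt_slope huS hvS huv (hfd u huS)
  have hv_gt : slope f u v < deriv f v := hfc.slope_lt_deriv huS hvS huv (hfd v hvS)
  have hsecant : f v - f u = slope f u v * (v - u) := by
    rw [slope_def_field]; field_simp [(sub_pos.2 huv).ne']
  have hpu : 0 ≤ u - p := sub_nonneg.2 hpu
  -- `h v - h u = (f'(v) - slope) (v - u) + (f'(v) - f'(u)) (u - p)`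
  nlinarith [mul_pos (sub_pos.2 hv_gt) (sub_pos.2 huv),
    mul_nonneg (sub_nonneg.2 (hu_lt.trans hv_gt).le) hpu]

theorem stmt_9_general (f g : ℝ → ℝ)
    (hf : Differentiable ℝ f) (hfc : StrictConvexOn ℝ Set.univ f)
    (uP uS : ℝ) (hS : uP < uS)
    (htan : deriv f uS = (f uS - g uP) / (uS - uP)) :
    (∀ u, uS < u → (f u - g uP) / (u - uP) < deriv f u) ∧
      ∀ u, uP < u → u < uS → deriv f u < (f u - g uP) / (u - uP) := by
  have hmono := hfc.strictMonoOn_deriv_mul_sub_sub (fun x _ => hf x) uP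
  have hmem : ∀ u, uP ≤ u → u ∈ univ ∩ Ici uP := fun u hu => ⟨mem_univ u, hu⟩
  have htan' : deriv f uS * (uS - uP) - f uS = -g uP := by
    rw [htan, div_mul_cancel₀ _ (sub_pos.2 hS).ne']; ring
  constructor
  · intro u hu
    have := hmono (hmem uS hS.le) (hmem u (hS.trans hu).le) hu
    rw [div_lt_iff₀ (sub_pos.2 (hS.trans hu))]
    dsimp only at this; linarith
  · intro u hPu huS
    have := hmono (hmem u hPu.le) (hmem uS hS.le) huS
    rw [lt_div_iff₀ (sub_pos.2 hPu)]
    dsimp only at this; linarith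

theorem stmt_9 (f g : ℝ → ℝ)
    (hf : Differentiable ℝ f) (hfc : StrictConvexOn ℝ Set.univ f)
    (hfg : ∀ u, g u < f u) (uP uS : ℝ) (hS : uP < uS)
    (htan : deriv f uS = (f uS - g uP) / (uS - uP)) :
    (∀ u, uS < u → (f u - g uP) / (u - uP) < deriv f u) ∧
      ∀ u, uP < u → u < uS → deriv f u < (f u - g uP) / (u - uP) :=
  stmt_9_general f g hf hfc uP uS hS htan
end

section
/- Under the hypotheses of the previous lemma (v nonincreasing in x, nonincreasing along curves of slope ≥ a - ε, y and z Lipschitz with derivative ≥ a and y(0)=z(0)=0), if t ∈ [0,τ] and y(t) < z(t), then there exists t' ∈ [0,t) with t - t' ≤ δ(t)/ε and v(t, y(t)) ≤ v(t', z(t')), where δ(t) = sup_{0<s<t}|y(s) - z(s)|. -/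
/-!
Follow the line of slope `a - ε` through `(t, y t)` backwards in time. At time `0` it lies below
`z 0 = 0`, because `y t ≥ a t` and `ε t > 0`, while at time `t` it lies below `z t`; so by the
intermediate value theorem it meets the graph of `z` at some `t' ∈ (0, t)`. Since `v` does not
increase along the line, `v t (y t) ≤ v t' (z t')`. Over `[t', t]` the curve `y` rises by at least
`a (t - t')` and the line by exactly `(a - ε) (t - t')`, so `z t' - y t' ≥ ε (t - t')`, and this gap
is at most `δ`.
-/

open MeasureTheory Set

theorem LipschitzWith.mul_sub_le_sub_of_ae_le_deriv {f : ℝ → ℝ} {K : NNReal}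
    (hf : LipschitzWith K f) {a r s : ℝ} (hrs : r ≤ s)
    (hd : ∀ᵐ x ∂volume.restrict (Icc r s), a ≤ deriv f x) :
    a * (s - r) ≤ f s - f r := by
  have hac : AbsolutelyContinuousOnInterval f r s :=
    (hf.lipschitzOnWith (s := uIcc r s)).absolutelyContinuousOnInterval
  calc a * (s - r) = ∫ _ in r..s, a := by simp [mul_comm]
    _ ≤ ∫ x in r..s, deriv f x :=
      intervalIntegral.integral_mono_ae_restrict hrs intervalIntegrable_const
        hac.intervalIntegrable_deriv hd
    _ = f s - f r := hac.integral_deriv_eq_sub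

theorem lipschitzWith_const_add_mul_sub (c m t : ℝ) :
    LipschitzWith (Real.nnabs m) (fun u : ℝ => c + m * (u - t)) := by
  refine LipschitzWith.of_dist_le_mul fun p q => ?_
  simp only [Real.dist_eq, Real.coe_nnabs, ← abs_mul]
  ring_nf
  rfl

theorem stmt_13_general (τ a ε : ℝ) (hε : 0 < ε)
    (v : ℝ → ℝ → ℝ)
    (hcurve : ∀ γ : ℝ → ℝ, (∃ L, LipschitzWith L γ) →
      (∀ s, a - ε ≤ deriv γ s) →
      ∀ s t : ℝ, 0 ≤ s → s ≤ t → t ≤ τ → v t (γ t) ≤ v s (γ s))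
    (y z : ℝ → ℝ)
    (hy : ∃ L, LipschitzWith L y) (hz : ∃ L, LipschitzWith L z)
    (hy0 : y 0 = 0) (hz0 : z 0 = 0)
    (hy' : ∀ᵐ s ∂(MeasureTheory.volume.restrict (Set.Icc 0 τ)), a ≤ deriv y s)
    (t δ : ℝ) (ht : t ∈ Set.Icc 0 τ)
    (hδ : ∀ s, 0 < s → s < t → |y s - z s| ≤ δ)
    (hyz : y t < z t) :
    ∃ t', 0 ≤ t' ∧ t' < t ∧ t - t' ≤ δ / ε ∧ v t (y t) ≤ v t' (z t') := by
  obtain ⟨Ly, hLy⟩ := hy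
  obtain ⟨Lz, hLz⟩ := hz
  have ht0 : 0 < t := ht.1.lt_of_ne (by rintro rfl; simp [hy0, hz0] at hyz)
  have hgrowth : ∀ r, 0 ≤ r → r ≤ t → a * (t - r) ≤ y t - y r := fun r hr hrt =>
    hLy.mul_sub_le_sub_of_ae_le_deriv hrt
      (ae_restrict_of_ae_restrict_of_subset (Icc_subset_Icc hr ht.2) hy')
  set γ : ℝ → ℝ := fun u => y t + (a - ε) * (u - t) with hγ
  obtain ⟨t', ⟨ht'0, ht't⟩, hzt'⟩ : ∃ t' ∈ Ioo 0 t, z t' - γ t' = 0 := by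
    refine intermediate_value_Ioo (f := fun u => z u - γ u) ht0.le (hLz.continuous.sub
      (lipschitzWith_const_add_mul_sub _ _ _).continuous).continuousOn ⟨?_, ?_⟩
    · have hyt := hgrowth 0 le_rfl ht0.le
      simp only [hγ, hz0, hy0] at hyt ⊢
      linarith [mul_pos hε ht0]
    · simpa [hγ] using hyz
  refine ⟨t', ht'0.le, ht't, ?_, ?_⟩
  · have hgap := hgrowth t' ht'0.le ht't.le
    have hδt' : |z t' - y t'| ≤ δ := abs_sub_comm (y t') (z t') ▸ hδ t' ht'0 ht't
    rw [le_div_iff₀ hε]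
    simp only [hγ] at hzt'
    linarith [le_abs_self (z t' - y t')]
  · have hline := hcurve γ ⟨_, lipschitzWith_const_add_mul_sub _ _ _⟩ (fun s => by simp [hγ])
      t' t ht'0.le ht't.le ht.2
    simpa [hγ, sub_eq_zero.1 hzt'] using hline

theorem stmt_13 (τ a ε : ℝ) (hτ : 0 < τ) (hε : 0 < ε)
    (v : ℝ → ℝ → ℝ)
    (hmono : ∀ t, ∀ x x' : ℝ, x ≤ x' → v t x' ≤ v t x)
    (hcurve : ∀ γ : ℝ → ℝ, (∃ L, LipschitzWith L γ) →
      (∀ s, a - ε ≤ deriv γ s) →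
      ∀ s t : ℝ, 0 ≤ s → s ≤ t → t ≤ τ → v t (γ t) ≤ v s (γ s))
    (y z : ℝ → ℝ)
    (hy : ∃ L, LipschitzWith L y) (hz : ∃ L, LipschitzWith L z)
    (hy0 : y 0 = 0) (hz0 : z 0 = 0)
    (hy' : ∀ᵐ s ∂(MeasureTheory.volume.restrict (Set.Icc 0 τ)), a ≤ deriv y s)
    (hz' : ∀ᵐ s ∂(MeasureTheory.volume.restrict (Set.Icc 0 τ)), a ≤ deriv z s)
    (t δ : ℝ) (ht : t ∈ Set.Icc 0 τ)
    (hδ : ∀ s, 0 < s → s < t → |y s - z s| ≤ δ)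
    (hyz : y t < z t) :
    ∃ t', 0 ≤ t' ∧ t' < t ∧ t - t' ≤ δ / ε ∧ v t (y t) ≤ v t' (z t') :=
  stmt_13_general τ a ε hε v hcurve y z hy hz hy0 hz0 hy' t δ ht hδ hyz
end

section
/- Let f(u) = u²/2 + 1 and g(u) = u²/2, x₀ ∈ ℝ. Define u(t,x) = (x - x₀)/t for x₀ ≤ x ≤ x₀ + √2 t (t > 0), u(t,x) = 0 otherwise, and θ(t,x) = 1 if x - x₀ < √2 t, θ(t,x) = 0 if x - x₀ > √2 t. Then for every test function φ ∈ C¹ compactly supported in (0,∞) × ℝ, ∫∫ { u φ_t + [θ f(u) + (1-θ) g(u)] φ_x } dx dt = 0. -/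
/-!
On the fan `x₀ ≤ x ≤ x₀ + √2 t` write `x = x₀ + √2 t y` with `y ∈ [0, 1]`, so that `u = √2 y`.
The pairing `J(t) = ∫ u φ dx = ∫₀¹ 2 t y φ(t, x₀ + √2 t y) dy` is a parametric integral over a
fixed interval, hence C¹ in `t` with compact support, so `∫ J' dt = 0`. For each `t > 0` the
inner integral of the weak form equals `J'(t)`: to the left of the fan the flux is `f(0) = 1`
and contributes `φ(t, x₀)`, on the fan the flux is `u²/2 + 1`, and to the right of the shock it
is `g(0) = 0`; integrating `∂_y [(1 - y²) φ(t, x₀ + √2 t y)]` over `[0, 1]` cancels `φ(t, x₀)`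
against the remaining terms exactly because `(√2)² = 2`, the Rankine–Hugoniot condition
`f(√2) - g(0) = √2 · (√2 - 0)` of the shock.
-/

open MeasureTheory Set Filter Function

section ParametricIntegral

variable {E : Type*} [NormedAddCommGroup E] [NormedSpace ℝ E]

theorem hasDerivAt_intervalIntegral_of_continuous {F F' : ℝ → ℝ → E}
    (hF : Continuous (uncurry F)) (hF' : Continuous (uncurry F'))
    (hderiv : ∀ t y, HasDerivAt (F · y) (F' t y) t) (a b t : ℝ) :
    HasDerivAt (fun t => ∫ y in a..b, F t y) (∫ y in a..b, F' t y) t := by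
  obtain ⟨C, hC⟩ := IsCompact.exists_bound_of_continuousOn
    ((isCompact_closedBall t 1).prod (isCompact_uIcc (a := a) (b := b))) hF'.continuousOn
  refine (intervalIntegral.hasDerivAt_integral_of_dominated_loc_of_deriv_le
    (bound := fun _ => C) (Metric.ball_mem_nhds t one_pos)
    (Eventually.of_forall fun τ => (hF.comp (Continuous.prodMk_right τ)).aestronglyMeasurable)
    ((hF.comp (Continuous.prodMk_right t)).intervalIntegrable a b)
    (hF'.comp (Continuous.prodMk_right t)).aestronglyMeasurable
    (ae_of_all _ fun y hy τ hτ =>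
      hC (τ, y) ⟨Metric.ball_subset_closedBall hτ, uIoc_subset_uIcc hy⟩)
    intervalIntegrable_const (ae_of_all _ fun y _ τ _ => hderiv τ y)).2

theorem integrable_intervalIntegral_of_continuous {F : ℝ → ℝ → E}
    (hF : Continuous (uncurry F)) {K : Set ℝ} (hK : IsCompact K)
    (hFK : ∀ t ∉ K, ∀ y, F t y = 0) (a b : ℝ) :
    Integrable fun t => ∫ y in a..b, F t y :=
  Continuous.integrable_of_hasCompactSupport
    (intervalIntegral.continuous_parametric_intervalIntegral_of_continuous' hF a b)
    (.intro hK fun t ht => by simp [hFK t ht])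

end ParametricIntegral

theorem HasCompactSupport.of_uncurry {E : Type*} [NormedAddCommGroup E] {φ : ℝ → ℝ → E}
    (hφ : HasCompactSupport (uncurry φ)) (t : ℝ) : HasCompactSupport (φ t) :=
  .intro (hφ.image continuous_snd) fun x hx =>
    image_eq_zero_of_notMem_tsupport (f := uncurry φ) fun h => hx ⟨(t, x), h, rfl⟩

section PartialDerivatives

variable {E : Type*} [NormedAddCommGroup E] [NormedSpace ℝ E] {φ : ℝ → ℝ → E}

theorem ContDiff.of_uncurry {n : WithTop ℕ∞} (hφ : ContDiff ℝ n (uncurry φ)) (t : ℝ) :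
    ContDiff ℝ n (φ t) :=
  hφ.comp (contDiff_const.prodMk contDiff_id)

theorem deriv_fst_eq_fderiv_uncurry {t x : ℝ} (hφ : DifferentiableAt ℝ (uncurry φ) (t, x)) :
    deriv (φ · x) t = fderiv ℝ (uncurry φ) (t, x) (1, 0) :=
  (hφ.hasFDerivAt.comp_hasDerivAt (f := fun τ => (τ, x)) t
    ((hasDerivAt_id t).prodMk (hasDerivAt_const t x))).deriv

theorem deriv_snd_eq_fderiv_uncurry {t x : ℝ} (hφ : DifferentiableAt ℝ (uncurry φ) (t, x)) :
    deriv (φ t) x = fderiv ℝ (uncurry φ) (t, x) (0, 1) :=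
  (hφ.hasFDerivAt.comp_hasDerivAt (f := fun w => (t, w)) x
    ((hasDerivAt_const x t).prodMk (hasDerivAt_id x))).deriv

theorem hasDerivAt_uncurry_comp (hφ : Differentiable ℝ (uncurry φ)) {γ : ℝ → ℝ} {c t : ℝ}
    (hγ : HasDerivAt γ c t) :
    HasDerivAt (fun τ => φ τ (γ τ)) (deriv (φ · (γ t)) t + c • deriv (φ t) (γ t)) t := by
  have h := (hφ (t, γ t)).hasFDerivAt.comp_hasDerivAt (f := fun τ => (τ, γ τ)) t
    ((hasDerivAt_id t).prodMk hγ)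
  rwa [show ((1 : ℝ), c) = (1, 0) + c • (0, 1) by simp, map_add, map_smul,
    ← deriv_fst_eq_fderiv_uncurry (hφ _), ← deriv_snd_eq_fderiv_uncurry (hφ _)] at h

theorem continuous_deriv_fst (hφ : ContDiff ℝ 1 (uncurry φ)) :
    Continuous fun p : ℝ × ℝ => deriv (φ · p.2) p.1 := by
  simp only [deriv_fst_eq_fderiv_uncurry (hφ.differentiable one_ne_zero _)]
  exact (hφ.continuous_fderiv one_ne_zero).clm_apply continuous_const

theorem continuous_deriv_snd (hφ : ContDiff ℝ 1 (uncurry φ)) :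
    Continuous fun p : ℝ × ℝ => deriv (φ p.1) p.2 := by
  simp only [deriv_snd_eq_fderiv_uncurry (hφ.differentiable one_ne_zero _)]
  exact (hφ.continuous_fderiv one_ne_zero).clm_apply continuous_const

theorem deriv_fst_eq_zero_of_notMem_tsupport {t x : ℝ} (h : (t, x) ∉ tsupport (uncurry φ)) :
    deriv (φ · x) t = 0 :=
  deriv_of_notMem_tsupport fun ht =>
    h (tsupport_comp_subset_preimage (f := fun τ => (τ, x)) (uncurry φ) (by fun_prop) ht)

theorem deriv_snd_eq_zero_of_notMem_tsupport {t x : ℝ} (h : (t, x) ∉ tsupport (uncurry φ)) :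
    deriv (φ t) x = 0 :=
  deriv_of_notMem_tsupport fun hx =>
    h (tsupport_comp_subset_preimage (f := fun w => (t, w)) (uncurry φ) (by fun_prop) hx)

end PartialDerivatives

noncomputable section

variable (x₀ : ℝ)

def fanSolution (t x : ℝ) : ℝ :=
  if x₀ ≤ x ∧ x ≤ x₀ + √2 * t ∧ 0 < t then (x - x₀) / t else 0

def fanPhase (t x : ℝ) : ℝ := if x - x₀ < √2 * t then 1 else 0

theorem fan_weakIntegrand_ae_eq {t : ℝ} (ht : 0 < t) (A B : ℝ → ℝ) :
    (fun x => fanSolution x₀ t x * A x + (fanSolution x₀ t x ^ 2 / 2 + fanPhase x₀ t x) * B x)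
      =ᵐ[volume] (Iic x₀).indicator B + (Ioc x₀ (x₀ + √2 * t)).indicator
        (fun x => (x - x₀) / t * A x + (((x - x₀) / t) ^ 2 / 2 + 1) * B x) := by
  filter_upwards [Measure.ae_ne volume (x₀ + √2 * t)] with x hx
  have hst : 0 < √2 * t := by positivity
  rcases le_or_gt x x₀ with hl | hl
  · have hu : fanSolution x₀ t x = 0 := by
      unfold fanSolution
      split_ifs with h
      · rw [le_antisymm hl h.1, sub_self, zero_div]
      · rfl
    have hθ : fanPhase x₀ t x = 1 := if_pos (by linarith)
    simp [hu, hθ, hl, not_lt.2 hl]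
  rcases hx.lt_or_gt with hr | hr
  · have hu : fanSolution x₀ t x = (x - x₀) / t := if_pos ⟨hl.le, hr.le, ht⟩
    have hθ : fanPhase x₀ t x = 1 := if_pos (by linarith)
    simp [hu, hθ, hl, hr.le, not_le.2 hl]
  · have hu : fanSolution x₀ t x = 0 := if_neg fun h => by linarith [h.2.1]
    have hθ : fanPhase x₀ t x = 0 := if_neg (by linarith)
    simp [hu, hθ, not_le.2 hl, not_le.2 hr]

theorem integral_fan_weakIntegrand {t : ℝ} (ht : 0 < t) {A B : ℝ → ℝ} (hA : Continuous A)
    (hB : Continuous B) (hBi : IntegrableOn B (Iic x₀)) :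
    ∫ x, (fanSolution x₀ t x * A x + (fanSolution x₀ t x ^ 2 / 2 + fanPhase x₀ t x) * B x)
      = (∫ x in Iic x₀, B x) + √2 * t * ∫ y in (0 : ℝ)..1,
          (√2 * y * A (x₀ + √2 * t * y) + (y ^ 2 + 1) * B (x₀ + √2 * t * y)) := by
  set fan := fun x => (x - x₀) / t * A x + (((x - x₀) / t) ^ 2 / 2 + 1) * B x
  have hfan : Continuous fan := by fun_prop
  have hst : 0 < √2 * t := by positivity
  rw [integral_congr_ae (fan_weakIntegrand_ae_eq x₀ ht A B),
    integral_add' (hBi.integrable_indicator measurableSet_Iic)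
      ((hfan.integrableOn_Icc.mono_set Ioc_subset_Icc_self).integrable_indicator measurableSet_Ioc),
    integral_indicator measurableSet_Iic, integral_indicator measurableSet_Ioc,
    ← intervalIntegral.integral_of_le (by linarith)]
  congr 1
  have h := intervalIntegral.smul_integral_comp_mul_add (a := 0) (b := 1) fan (√2 * t) x₀
  rw [mul_zero, zero_add, mul_one, add_comm _ x₀] at h
  rw [← h, smul_eq_mul]
  congr 1
  refine intervalIntegral.integral_congr fun y _ => ?_
  have hu : √2 * t * y / t = √2 * y := by field_simp
  simp only [fan, add_comm _ x₀, add_sub_cancel_left, hu, mul_pow, Real.sq_sqrt zero_le_two]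
  ring

-- `u φ` on the fan, in the coordinate `y` and including the Jacobian `√2 t`.
def fanDensity (φ : ℝ → ℝ → ℝ) (t y : ℝ) : ℝ :=
  2 * t * y * φ t (x₀ + √2 * t * y)

def fanDensityDeriv (φ : ℝ → ℝ → ℝ) (t y : ℝ) : ℝ :=
  2 * y * φ t (x₀ + √2 * t * y) + 2 * t * y *
    (deriv (φ · (x₀ + √2 * t * y)) t + √2 * y * deriv (φ t) (x₀ + √2 * t * y))

variable {φ : ℝ → ℝ → ℝ}

theorem continuous_fanDensity (hφ : Continuous (uncurry φ)) :
    Continuous (uncurry (fanDensity x₀ φ)) := by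
  have hpath : Continuous fun p : ℝ × ℝ => (p.1, x₀ + √2 * p.1 * p.2) := by fun_prop
  have h : Continuous fun p : ℝ × ℝ => φ p.1 (x₀ + √2 * p.1 * p.2) := hφ.comp hpath
  unfold fanDensity uncurry
  fun_prop

theorem continuous_fanDensityDeriv (hφ : ContDiff ℝ 1 (uncurry φ)) :
    Continuous (uncurry (fanDensityDeriv x₀ φ)) := by
  have hpath : Continuous fun p : ℝ × ℝ => (p.1, x₀ + √2 * p.1 * p.2) := by fun_prop
  have h0 : Continuous fun p : ℝ × ℝ => φ p.1 (x₀ + √2 * p.1 * p.2) :=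
    hφ.continuous.comp hpath
  have h1 : Continuous fun p : ℝ × ℝ => deriv (φ · (x₀ + √2 * p.1 * p.2)) p.1 :=
    (continuous_deriv_fst hφ).comp hpath
  have h2 : Continuous fun p : ℝ × ℝ => deriv (φ p.1) (x₀ + √2 * p.1 * p.2) :=
    (continuous_deriv_snd hφ).comp hpath
  unfold fanDensityDeriv uncurry
  fun_prop

theorem hasDerivAt_fanDensity (hφ : Differentiable ℝ (uncurry φ)) (t y : ℝ) :
    HasDerivAt (fanDensity x₀ φ · y) (fanDensityDeriv x₀ φ t y) t := by
  have hpath : HasDerivAt (fun τ => x₀ + √2 * τ * y) (√2 * y) t := by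
    simpa using (((hasDerivAt_id t).const_mul √2).mul_const y).const_add x₀
  refine ((((hasDerivAt_id t).const_mul 2).mul_const y).fun_mul
    (hasDerivAt_uncurry_comp hφ hpath)).congr_deriv ?_
  simp only [fanDensityDeriv, id, smul_eq_mul]
  ring

theorem fanDensity_eq_zero {t : ℝ} (ht : t ∉ Prod.fst '' tsupport (uncurry φ)) (y : ℝ) :
    fanDensity x₀ φ t y = 0 := by
  have h : (t, x₀ + √2 * t * y) ∉ tsupport (uncurry φ) := fun h => ht ⟨_, h, rfl⟩
  have h0 : φ t (x₀ + √2 * t * y) = 0 := image_eq_zero_of_notMem_tsupport (f := uncurry φ) h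
  simp [fanDensity, h0]

theorem fanDensityDeriv_eq_zero {t : ℝ} (ht : t ∉ Prod.fst '' tsupport (uncurry φ)) (y : ℝ) :
    fanDensityDeriv x₀ φ t y = 0 := by
  have h : (t, x₀ + √2 * t * y) ∉ tsupport (uncurry φ) := fun h => ht ⟨_, h, rfl⟩
  have h0 : φ t (x₀ + √2 * t * y) = 0 := image_eq_zero_of_notMem_tsupport (f := uncurry φ) h
  simp [fanDensityDeriv, h0,
    deriv_fst_eq_zero_of_notMem_tsupport h, deriv_snd_eq_zero_of_notMem_tsupport h]

theorem integral_fanDensityDeriv (hφ : ContDiff ℝ 1 (uncurry φ)) (t : ℝ) :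
    ∫ y in (0 : ℝ)..1, fanDensityDeriv x₀ φ t y
      = φ t x₀ + √2 * t * ∫ y in (0 : ℝ)..1,
          (√2 * y * deriv (φ · (x₀ + √2 * t * y)) t
            + (y ^ 2 + 1) * deriv (φ t) (x₀ + √2 * t * y)) := by
  have hpath : Continuous fun y => (t, x₀ + √2 * t * y) := by fun_prop
  have h0 : Continuous fun y => φ t (x₀ + √2 * t * y) := hφ.continuous.comp hpath
  have h1 : Continuous fun y => deriv (φ · (x₀ + √2 * t * y)) t :=
    (continuous_deriv_fst hφ).comp hpath
  have h2 : Continuous fun y => deriv (φ t) (x₀ + √2 * t * y) :=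
    (continuous_deriv_snd hφ).comp hpath
  have hboundary : ∀ y, HasDerivAt (fun y => (1 - y ^ 2) * φ t (x₀ + √2 * t * y))
      (√2 * t * (1 - y ^ 2) * deriv (φ t) (x₀ + √2 * t * y)
        - 2 * y * φ t (x₀ + √2 * t * y)) y := by
    intro y
    have hx : HasDerivAt (fun y => x₀ + √2 * t * y) (√2 * t) y := by
      simpa using ((hasDerivAt_id y).const_mul (√2 * t)).const_add x₀
    have hφy := ((hφ.of_uncurry t).differentiable one_ne_zero _).hasDerivAt.comp y hx
    refine (((hasDerivAt_pow 2 y).const_sub 1).fun_mul hφy).congr_deriv ?_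
    simp only [Nat.cast_ofNat, Function.comp_apply]
    ring
  have hsq : √2 ^ 2 = 2 := Real.sq_sqrt zero_le_two
  calc ∫ y in (0 : ℝ)..1, fanDensityDeriv x₀ φ t y
      = ∫ y in (0 : ℝ)..1, (√2 * t * (√2 * y * deriv (φ · (x₀ + √2 * t * y)) t
          + (y ^ 2 + 1) * deriv (φ t) (x₀ + √2 * t * y)) - (√2 * t * (1 - y ^ 2) *
            deriv (φ t) (x₀ + √2 * t * y) - 2 * y * φ t (x₀ + √2 * t * y))) := by
        refine intervalIntegral.integral_congr fun y _ => ?_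
        simp only [fanDensityDeriv]
        linear_combination (-(t * y * deriv (φ · (x₀ + √2 * t * y)) t)) * hsq
    _ = _ := by
        rw [intervalIntegral.integral_sub (Continuous.intervalIntegrable (by fun_prop) _ _)
            (Continuous.intervalIntegrable (by fun_prop) _ _),
          intervalIntegral.integral_const_mul, intervalIntegral.integral_eq_sub_of_hasDerivAt
            (fun y _ => hboundary y) (Continuous.intervalIntegrable (by fun_prop) _ _)]
        simp
        ring

theorem integral_fan_weakIntegrand_eq_integral_fanDensityDeriv (hφ : ContDiff ℝ 1 (uncurry φ))
    (hc : HasCompactSupport (uncurry φ)) {t : ℝ} (ht : 0 < t) :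
    ∫ x, (fanSolution x₀ t x * deriv (φ · x) t
        + (fanSolution x₀ t x ^ 2 / 2 + fanPhase x₀ t x) * deriv (φ t) x)
      = ∫ y in (0 : ℝ)..1, fanDensityDeriv x₀ φ t y := by
  have hslice := hφ.of_uncurry t
  have hderiv := hslice.continuous_deriv le_rfl
  rw [integral_fan_weakIntegrand x₀ ht (A := fun x => deriv (φ · x) t)
      ((continuous_deriv_fst hφ).comp (Continuous.prodMk_right t)) hderiv
      (hderiv.integrable_of_hasCompactSupport (hc.of_uncurry t).deriv).integrableOn,
    (hc.of_uncurry t).integral_Iic_deriv_eq hslice, integral_fanDensityDeriv x₀ hφ]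

end

theorem stmt_16 (f g : ℝ → ℝ) (x₀ : ℝ) (u θ : ℝ → ℝ → ℝ)
    (hf : f = fun v => v ^ 2 / 2 + 1) (hg : g = fun v => v ^ 2 / 2)
    (hu : u = fun t x =>
      if x₀ ≤ x ∧ x ≤ x₀ + Real.sqrt 2 * t ∧ 0 < t then (x - x₀) / t else 0)
    (hθ : θ = fun t x => if x - x₀ < Real.sqrt 2 * t then 1 else 0)
    (φ : ℝ → ℝ → ℝ)
    (hφ : ContDiff ℝ 1 (fun p : ℝ × ℝ => φ p.1 p.2))
    (hsupp : HasCompactSupport (fun p : ℝ × ℝ => φ p.1 p.2))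
    (hsupp' : tsupport (fun p : ℝ × ℝ => φ p.1 p.2) ⊆ Set.Ioi 0 ×ˢ Set.univ) :
    ∫ t : ℝ, ∫ x : ℝ,
      (u t x * deriv (fun s => φ s x) t +
        (θ t x * f (u t x) + (1 - θ t x) * g (u t x)) * deriv (fun w => φ t w) x)
      = 0 := by
  subst hf hg
  obtain rfl : u = fanSolution x₀ := hu
  obtain rfl : θ = fanPhase x₀ := hθ
  have hweak : ∀ t, ∫ x, (fanSolution x₀ t x * deriv (fun s => φ s x) t
      + (fanPhase x₀ t x * (fanSolution x₀ t x ^ 2 / 2 + 1)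
        + (1 - fanPhase x₀ t x) * (fanSolution x₀ t x ^ 2 / 2)) * deriv (fun w => φ t w) x)
      = ∫ y in (0 : ℝ)..1, fanDensityDeriv x₀ φ t y := by
    intro t
    rcases lt_or_ge 0 t with ht | ht
    · rw [← integral_fan_weakIntegrand_eq_integral_fanDensityDeriv x₀ hφ hsupp ht]
      congr with x
      ring
    · have ht_supp : t ∉ Prod.fst '' tsupport (uncurry φ) := fun ⟨p, hp, hpt⟩ => by
        linarith [(hsupp' hp).1.out]
      have hp x : (t, x) ∉ tsupport (uncurry φ) := fun h => ht_supp ⟨_, h, rfl⟩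
      simp [fanDensityDeriv_eq_zero x₀ ht_supp, deriv_fst_eq_zero_of_notMem_tsupport (hp _),
        deriv_snd_eq_zero_of_notMem_tsupport (hp _)]
  rw [integral_congr_ae (ae_of_all _ hweak)]
  have hK := hsupp.image continuous_fst
  exact integral_eq_zero_of_hasDerivAt_of_integrable
    (fun t => hasDerivAt_intervalIntegral_of_continuous
      (continuous_fanDensity x₀ hφ.continuous) (continuous_fanDensityDeriv x₀ hφ)
      (hasDerivAt_fanDensity x₀ (hφ.differentiable one_ne_zero)) 0 1 t)
    (integrable_intervalIntegral_of_continuous (continuous_fanDensityDeriv x₀ hφ) hK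
      (fun t ht => fanDensityDeriv_eq_zero x₀ ht) 0 1)
    (integrable_intervalIntegral_of_continuous (continuous_fanDensity x₀ hφ.continuous) hK
      (fun t ht => fanDensity_eq_zero x₀ ht) 0 1)
end

section
/- Let f : ℝ → ℝ be differentiable and strictly convex, let g be differentiable with g < f, fix u⁻ ∈ ℝ and let v* < u⁻ satisfy f'(v*)(v* - u⁻) = f(v*) - g(u⁻). Then for every u < v*: f'(u) < (f(u) - g(u⁻))/(u - u⁻), and for every v* < u < u⁻: f'(u) > (f(u) - g(u⁻))/(u - u⁻). -/
/-!
Write `T_a(x) = f a + f'(a) (x - a)` for the tangent line of `f` at `a`. The tangency condition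
says `g(u⁻) = T_{v*}(u⁻)`, and for `u < u⁻` each of the two inequalities is equivalent to comparing
`T_u(u⁻)` with `g(u⁻)`. For a strictly convex function, `a ↦ T_a(x)` is strictly increasing on
`a ≤ x`, so `T_u(u⁻) < T_{v*}(u⁻)` when `u < v*` and `T_{v*}(u⁻) < T_u(u⁻)` when `v* < u < u⁻`.
-/

lemma StrictConvexOn.add_deriv_mul_sub_lt {s : Set ℝ} {f : ℝ → ℝ} (hfc : StrictConvexOn ℝ s f)
    {a b x : ℝ} (ha : a ∈ s) (hb : b ∈ s) (hab : a < b) (hbx : b ≤ x)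
    (hfa : DifferentiableAt ℝ f a) (hfb : DifferentiableAt ℝ f b) :
    f a + deriv f a * (x - a) < f b + deriv f b * (x - b) := by
  have hderiv_a := hfc.deriv_lt_slope ha hb hab hfa
  have hderiv_ab : deriv f a ≤ deriv f b := (hderiv_a.trans (hfc.slope_lt_deriv ha hb hab hfb)).le
  rw [slope_def_field, lt_div_iff₀ (sub_pos.2 hab)] at hderiv_a
  have := mul_le_mul_of_nonneg_right hderiv_ab (sub_nonneg.2 hbx)
  calc f a + deriv f a * (x - a) = f a + deriv f a * (b - a) + deriv f a * (x - b) := by ring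
    _ < f b + deriv f b * (x - b) := by linarith

theorem stmt_17_general (f g : ℝ → ℝ)
    (hf : Differentiable ℝ f) (hfc : StrictConvexOn ℝ Set.univ f)
    (uM vS : ℝ) (hS : vS < uM)
    (htan : deriv f vS * (vS - uM) = f vS - g uM) :
    (∀ u, u < vS → deriv f u < (f u - g uM) / (u - uM)) ∧
      ∀ u, vS < u → u < uM → (f u - g uM) / (u - uM) < deriv f u := by
  refine ⟨fun u hu => ?_, fun u hu huM => ?_⟩
  · have := hfc.add_deriv_mul_sub_lt trivial trivial hu hS.le (hf u) (hf vS)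
    rw [lt_div_iff_of_neg (by linarith)]
    linarith
  · have := hfc.add_deriv_mul_sub_lt trivial trivial hu huM.le (hf vS) (hf u)
    rw [div_lt_iff_of_neg (by linarith)]
    linarith

theorem stmt_17 (f g : ℝ → ℝ)
    (hf : Differentiable ℝ f) (hfc : StrictConvexOn ℝ Set.univ f)
    (hg : Differentiable ℝ g) (hfg : ∀ u, g u < f u)
    (uM vS : ℝ) (hS : vS < uM)
    (htan : deriv f vS * (vS - uM) = f vS - g uM) :
    (∀ u, u < vS → deriv f u < (f u - g uM) / (u - uM)) ∧
      ∀ u, vS < u → u < uM → (f u - g uM) / (u - uM) < deriv f u :=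
  stmt_17_general f g hf hfc uM vS hS htan
end
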